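/- arXiv:2109.10913 — 3 statements merged into one kernel-verified Lean document; each statement's English description precedes it below -/
import Mathlib

section
/- Let R be a fusion ring with basis of simple objects, let ψ be a basis element with ψ·ψ = 1, and suppose there exist basis elements a, b, c with N_{ab}^c > 0 and N_{ab}^{c·ψ} > 0. Then any function ζ from basis elements to U(1) satisfying ζ(a)ζ(b) = ζ(c) whenever N_{ab}^c > 0 must satisfy ζ(ψ) = 1. -/
lemma eq_of_fusion_channels {B M : Type*} [Mul M] {N : B → B → B → ℕ} {ζ : B → M}
    (hfus : ∀ x y z, 0 < N x y z → ζ x * ζ y = ζ z) {a b c c' : B}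
    (hc : 0 < N a b c) (hc' : 0 < N a b c') : ζ c = ζ c' :=
  (hfus a b c hc).symm.trans (hfus a b c' hc')

theorem stmt1_general {B : Type*} (N : B → B → B → ℕ) (ψ a b c cψ : B)
    (h1 : 0 < N a b c) (h2 : 0 < N a b cψ) (h3 : 0 < N c ψ cψ)
    (ζ : B → ℂ) (hnorm : ∀ x, ‖ζ x‖ = 1)
    (hfus : ∀ x y z, 0 < N x y z → ζ x * ζ y = ζ z) :
    ζ ψ = 1 := by
  have hc : ζ c * ζ ψ = ζ c := by
    rw [hfus c ψ cψ h3, eq_of_fusion_channels hfus h1 h2]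
  have hc0 : ζ c ≠ 0 := norm_ne_zero_iff.mp (by simp [hnorm])
  exact (mul_eq_left₀ hc0).mp hc

/-- In a fusion ring with basis of simple objects and structure
constants `N`, with a distinguished invertible basis element ψ satisfying
ψ·ψ = 1 (i.e. `N ψ ψ one > 0` with ψ×ψ = 1 exactly), suppose there are basis
elements a, b, c with N_{ab}^c > 0 and N_{ab}^{c·ψ} > 0 (here `cψ` denotes the
simple object c·ψ, so that `N c ψ cψ > 0`). Then any U(1)-valued function ζ on
the basis with ζ(x)ζ(y) = ζ(z) whenever N_{xy}^z > 0 must satisfy ζ(ψ) = 1. -/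
theorem stmt1 {B : Type*} (N : B → B → B → ℕ) (one ψ a b c cψ : B)
    (hψψ : 0 < N ψ ψ one)
    (hψorder : ∀ z, 0 < N ψ ψ z → z = one)
    (h1 : 0 < N a b c) (h2 : 0 < N a b cψ) (h3 : 0 < N c ψ cψ)
    (ζ : B → ℂ) (hone : ζ one = 1) (hnorm : ∀ x, ‖ζ x‖ = 1)
    (hfus : ∀ x y z, 0 < N x y z → ζ x * ζ y = ζ z) :
    ζ ψ = 1 :=
  stmt1_general N ψ a b c cψ h1 h2 h3 ζ hnorm hfus
end

section
/- Let n be an odd positive integer and let ω : U(1) × U(1) → {±1} be the 2-cocycle ω(e^{iφ}, e^{iφ′}) = exp(i(φ + φ′ - [φ+φ′])/2) where φ, φ′ ∈ [0, 2π) and [x] = x mod 2π. Then the normalized U(1)-valued 2-cochains η on U(1) satisfying the 2-cocycle condition and ηⁿ = ω, of the form η(e^{iφ},e^{iφ′}) = exp(iq(φ + φ′ - [φ+φ′])/(2n)), are exactly those with q an odd integer; and two such solutions q, q′ give the same η iff q ≡ q′ (mod 2n). In particular there are exactly n solutions of this form up to equality, parametrized by odd residues q mod 2n. -/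
/-- Reduction mod 2π of x ∈ [0, 4π): [x] = x if x < 2π, else x - 2π. -/
noncomputable def wrap16 (x : ℝ) : ℝ := if x < 2 * Real.pi then x else x - 2 * Real.pi

/-- The candidate fractionalization cochain
η_q(e^{iφ}, e^{iφ′}) = exp(i q (φ + φ′ - [φ+φ′]) / (2n)) for angles φ, φ′. -/
noncomputable def etaq16 (n q : ℤ) (φ φ' : ℝ) : ℂ :=
  Complex.exp (Complex.I * q * (φ + φ' - wrap16 (φ + φ')) / (2 * n))

lemma eta_val16 (n q : ℤ) (φ φ' : ℝ) :
    etaq16 n q φ φ' = Complex.exp (Complex.I * q * ((φ + φ' - wrap16 (φ + φ') : ℝ) : ℂ) / (2 * n)) := by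
  unfold etaq16; push_cast; ring_nf

lemma wrapS16 {φ φ' : ℝ} (hφ : φ ∈ Set.Ico (0:ℝ) (2*Real.pi)) (hφ' : φ' ∈ Set.Ico (0:ℝ) (2*Real.pi)) :
    (φ + φ' - wrap16 (φ + φ') = 0) ∨ (φ + φ' - wrap16 (φ + φ') = 2*Real.pi) := by
  unfold wrap16; split_ifs with h
  · left; ring
  · right; ring

lemma eta_mul16 (n q : ℤ) (a b c d : ℝ) :
    etaq16 n q a b * etaq16 n q c d
      = Complex.exp (Complex.I * q * (((a + b - wrap16 (a+b)) + (c + d - wrap16 (c+d)) : ℝ) : ℂ) / (2*n)) := by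
  unfold etaq16; rw [← Complex.exp_add]; congr 1; push_cast; ring

lemma Seq16 {φ φ' φ'' : ℝ} (hφ : φ ∈ Set.Ico (0:ℝ) (2*Real.pi)) (hφ' : φ' ∈ Set.Ico (0:ℝ) (2*Real.pi))
    (hφ'' : φ'' ∈ Set.Ico (0:ℝ) (2*Real.pi)) :
    (φ + φ' - wrap16 (φ+φ')) + (wrap16 (φ+φ') + φ'' - wrap16 (wrap16 (φ+φ') + φ''))
      = (φ' + φ'' - wrap16 (φ'+φ'')) + (φ + wrap16 (φ'+φ'') - wrap16 (φ + wrap16 (φ'+φ''))) := by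
  obtain ⟨h1, h2⟩ := hφ; obtain ⟨h3, h4⟩ := hφ'; obtain ⟨h5, h6⟩ := hφ''
  unfold wrap16
  split_ifs <;> linarith [Real.pi_pos]

/-- Let n be an odd positive integer and
ω(e^{iφ}, e^{iφ′}) = exp(i(φ + φ′ - [φ+φ′])/2) (which is `etaq16 1 1`).
Then the 2-cochains of the form η_q (q ∈ ℤ) that satisfy the 2-cocycle
condition and η_qⁿ = ω are exactly those with q odd; and η_q = η_{q′} as
functions on [0,2π)² iff q ≡ q′ (mod 2n). Hence there are exactly n such
solutions, parametrized by odd residues q mod 2n. -/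
theorem stmt16 (n : ℤ) (hn : 0 < n) (hodd : Odd n) (q : ℤ) :
    (((∀ φ ∈ Set.Ico (0 : ℝ) (2 * Real.pi), ∀ φ' ∈ Set.Ico (0 : ℝ) (2 * Real.pi),
        (etaq16 n q φ φ') ^ n = etaq16 1 1 φ φ') ∧
      (∀ φ ∈ Set.Ico (0 : ℝ) (2 * Real.pi), ∀ φ' ∈ Set.Ico (0 : ℝ) (2 * Real.pi),
        ∀ φ'' ∈ Set.Ico (0 : ℝ) (2 * Real.pi),
        etaq16 n q φ φ' * etaq16 n q (wrap16 (φ + φ')) φ''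
          = etaq16 n q φ' φ'' * etaq16 n q φ (wrap16 (φ' + φ''))))
      ↔ Odd q) ∧
    (∀ q' : ℤ,
      (∀ φ ∈ Set.Ico (0 : ℝ) (2 * Real.pi), ∀ φ' ∈ Set.Ico (0 : ℝ) (2 * Real.pi),
        etaq16 n q φ φ' = etaq16 n q' φ φ')
      ↔ q ≡ q' [ZMOD 2 * n]) := by
  have hπpos := Real.pi_pos
  have hπmem : Real.pi ∈ Set.Ico (0:ℝ) (2*Real.pi) := ⟨hπpos.le, by linarith⟩
  have hππ : Real.pi + Real.pi - wrap16 (Real.pi + Real.pi) = 2 * Real.pi := by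
    unfold wrap16; rw [if_neg (by linarith)]; ring
  have hn' : (n:ℂ) ≠ 0 := Int.cast_ne_zero.mpr hn.ne'
  have hπ' : (Real.pi : ℂ) ≠ 0 := by exact_mod_cast Real.pi_ne_zero
  constructor
  · constructor
    · rintro ⟨hpow, -⟩
      have hc := hpow Real.pi hπmem Real.pi hπmem
      rw [eta_val16, eta_val16, hππ, ← Complex.exp_int_mul] at hc
      have e1 : (n:ℂ) * (Complex.I * q * ((2*Real.pi:ℝ):ℂ) / (2*n)) = Complex.I * Real.pi * q := by
        push_cast; field_simp
      have e2 : Complex.I * ((1:ℤ):ℂ) * ((2*Real.pi:ℝ):ℂ) / (2*((1:ℤ):ℂ)) = Complex.I * Real.pi := by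
        push_cast; ring
      rw [e1, e2] at hc
      rw [Complex.exp_eq_exp_iff_exists_int] at hc
      obtain ⟨k, hk⟩ := hc
      have h3 : (Complex.I * Real.pi) * (q:ℂ) = (Complex.I * Real.pi) * ((1:ℂ) + 2*k) := by
        linear_combination hk
      have h4 : (q:ℂ) = 1 + 2*k := mul_left_cancel₀ (mul_ne_zero Complex.I_ne_zero hπ') h3
      have h5 : q = 1 + 2*k := by exact_mod_cast h4
      exact ⟨k, by omega⟩
    · intro hq
      obtain ⟨k, hk⟩ := hq
      constructor
      · intro φ hφ φ' hφ'
        rw [eta_val16, eta_val16]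
        rcases wrapS16 hφ hφ' with hS | hS <;> rw [hS]
        · norm_num
        · rw [← Complex.exp_int_mul, Complex.exp_eq_exp_iff_exists_int]
          refine ⟨k, ?_⟩
          push_cast [hk]
          field_simp
          ring
      · intro φ hφ φ' hφ' φ'' hφ''
        rw [eta_mul16, eta_mul16, Seq16 hφ hφ' hφ'']
  · intro q'
    constructor
    · intro h
      have hc := h Real.pi hπmem Real.pi hπmem
      rw [eta_val16, eta_val16, hππ, Complex.exp_eq_exp_iff_exists_int] at hc
      obtain ⟨k, hk⟩ := hc
      have h3 : (Complex.I * Real.pi) * (q:ℂ) = (Complex.I * Real.pi) * ((q':ℂ) + 2*n*k) := by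
        field_simp at hk
        push_cast at hk
        linear_combination (Complex.I / 2) * hk
      have h4 : (q:ℂ) = (q':ℂ) + 2*n*k := mul_left_cancel₀ (mul_ne_zero Complex.I_ne_zero hπ') h3
      have h5 : q = q' + 2*n*k := by exact_mod_cast h4
      exact (Int.modEq_iff_dvd.mpr ⟨-k, by linarith⟩)
    · intro h
      obtain ⟨k, hk⟩ := Int.modEq_iff_dvd.mp h
      have hq : (q:ℂ) = (q':ℂ) - 2*n*k := by
        have : (q':ℤ) - q = 2*n*k := hk
        push_cast [show (q:ℤ) = q' - 2*n*k by omega]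
        ring
      intro φ hφ φ' hφ'
      rw [eta_val16, eta_val16]
      rcases wrapS16 hφ hφ' with hS | hS <;> rw [hS]
      · norm_num
      · rw [Complex.exp_eq_exp_iff_exists_int]
        refine ⟨-k, ?_⟩
        rw [hq]
        push_cast
        field_simp
        ring
end

section
/- Let S be an N×N unitary symmetric matrix (the S-matrix of a modular category Č) with first row real positive; set d_y = S_{1y}/S_{11}, D = 1/S_{11}. Suppose ψ is an index with S_{ψz} = ε(z) S_{1z} where ε(z) ∈ {±1}, and let Č₀ = {z : ε(z) = +1}. Let x, y be indices such that M_{xz} := S̄_{xz}S_{11}/(S_{1x}S_{1z}) satisfies M_{xz} = M_{yz}, and both are phases, for all z ∈ Č₀. Then Σ_{z∈Č₀} S_{xz} S̄_{yz} > 0. In particular, if the Verlinde formula N_{x1}^y + N_{xψ}^y = 2 Σ_{z∈Č₀} S_{xz} S̄_{yz} holds (it does by unitarity of S and S_{ψz} = ε(z)S_{1z}), then N_{x1}^y + N_{xψ}^y > 0, i.e., y = x or y = x × ψ. -/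
open scoped BigOperators

/-- Let S be a unitary symmetric matrix with first row real and
positive (the S-matrix of a modular category). Suppose ψ is an index with
S_{ψz} = ε(z) S_{1z}, ε(z) ∈ {±1}, and let Č₀ = {z : ε(z) = +1}. If x, y are
indices such that the monodromy M_{uz} = S̄_{uz}S_{11}/(S_{1u}S_{1z}) satisfies
M_{xz} = M_{yz} with |M_{xz}| = 1 for all z ∈ Č₀, then Σ_{z∈Č₀} S_{xz} S̄_{yz}
is a positive real number; in particular 2 Σ_{z∈Č₀} S_{xz} S̄_{yz} (which by
unitarity and the Verlinde formula equals N_{x1}^y + N_{xψ}^y) is nonzero. -/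
theorem stmt18 {n : ℕ} (S : Matrix (Fin (n + 1)) (Fin (n + 1)) ℂ)
    (hU : S ∈ Matrix.unitaryGroup (Fin (n + 1)) ℂ)
    (hsym : S.transpose = S)
    (hrow : ∀ y, (S 0 y).im = 0 ∧ 0 < (S 0 y).re)
    (ψ : Fin (n + 1)) (ε : Fin (n + 1) → ℂ)
    (hε : ∀ z, ε z = 1 ∨ ε z = -1)
    (hψ : ∀ z, S ψ z = ε z * S 0 z)
    (C0 : Finset (Fin (n + 1))) (hC0 : ∀ z, z ∈ C0 ↔ ε z = 1)
    (x y : Fin (n + 1))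
    (M : Fin (n + 1) → Fin (n + 1) → ℂ)
    (hM : ∀ u z, M u z = (starRingEnd ℂ) (S u z) * S 0 0 / (S 0 u * S 0 z))
    (hphase : ∀ z ∈ C0, ‖M x z‖ = 1)
    (heq : ∀ z ∈ C0, M x z = M y z) :
    (∃ r : ℝ, 0 < r ∧
      (∑ z ∈ C0, S x z * (starRingEnd ℂ) (S y z)) = (r : ℂ)) ∧
    2 * (∑ z ∈ C0, S x z * (starRingEnd ℂ) (S y z)) ≠ 0 := by

  have hsym' : ∀ i j, S i j = S j i := fun i j => by
    exact congrFun (congrFun hsym.symm i) j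
  have hz0 : ∀ z, S 0 z ≠ 0 := fun z h => by
    have := (hrow z).2; rw [h] at this; simp at this
  obtain ⟨haim, hapos⟩ := hrow x
  obtain ⟨hbim, hbpos⟩ := hrow y
  set a := (S 0 x).re with ha_def
  set b := (S 0 y).re with hb_def
  have hSx : S 0 x = (a : ℂ) := by apply Complex.ext <;> simp [haim, ha_def]
  have hSy : S 0 y = (b : ℂ) := by apply Complex.ext <;> simp [hbim, hb_def]
  have ha : (a : ℂ) ≠ 0 := by exact_mod_cast ne_of_gt hapos
  have hb : (b : ℂ) ≠ 0 := by exact_mod_cast ne_of_gt hbpos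
  -- 0 ∈ C0
  have h0C0 : (0 : Fin (n+1)) ∈ C0 := by
    rw [hC0]
    rcases hε 0 with h | h
    · exact h
    · exfalso
      have h1 := hψ 0
      rw [h, hsym' ψ 0] at h1
      have h2 : (S 0 ψ).re = -((S 0 0).re) := by rw [h1]; simp
      have := (hrow ψ).2
      have := (hrow 0).2
      linarith
  have key : ∀ z ∈ C0, S x z * (starRingEnd ℂ) (S y z)
      = ((Complex.normSq (S x z) * (b / a) : ℝ) : ℂ) := by
    intro z hz
    have h1 := heq z hz
    rw [hM, hM, hSx, hSy] at h1
    have h2 : (starRingEnd ℂ) (S x z) * (b : ℂ) = (starRingEnd ℂ) (S y z) * (a : ℂ) := by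
      have hS00 : S 0 0 ≠ 0 := hz0 0
      have hSz : S 0 z ≠ 0 := hz0 z
      field_simp at h1
      have h1' : ((starRingEnd ℂ) (S x z) * (b : ℂ)) * (S 0 0 * S 0 z)
          = ((starRingEnd ℂ) (S y z) * (a : ℂ)) * (S 0 0 * S 0 z) := by
        linear_combination (S 0 0 * S 0 z) * h1
      exact mul_right_cancel₀ (mul_ne_zero hS00 hSz) h1'
    have h4 : (starRingEnd ℂ) (S y z) = (starRingEnd ℂ) (S x z) * (b : ℂ) / (a : ℂ) := by
      rw [eq_div_iff ha]
      exact h2.symm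
    rw [h4]
    rw [show ((Complex.normSq (S x z) * (b / a) : ℝ) : ℂ)
        = (Complex.normSq (S x z) : ℂ) * (b : ℂ) / (a : ℂ) by push_cast; ring]
    rw [← Complex.mul_conj]
    ring
  have hsum : (∑ z ∈ C0, S x z * (starRingEnd ℂ) (S y z))
      = (((∑ z ∈ C0, Complex.normSq (S x z)) * (b / a) : ℝ) : ℂ) := by
    rw [Finset.sum_congr rfl key]
    push_cast
    rw [Finset.sum_mul]
  have hpos : 0 < (∑ z ∈ C0, Complex.normSq (S x z)) * (b / a) := by
    have h1 : 0 < ∑ z ∈ C0, Complex.normSq (S x z) := by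
      apply Finset.sum_pos' (fun z _ => Complex.normSq_nonneg _)
      refine ⟨0, h0C0, ?_⟩
      have : S x 0 = (a : ℂ) := by rw [hsym' x 0, hSx]
      rw [this]
      simpa [Complex.normSq_ofReal] using mul_pos hapos hapos
    exact mul_pos h1 (div_pos hbpos hapos)
  constructor
  · exact ⟨_, hpos, hsum⟩
  · rw [hsum]
    simp only [ne_eq, mul_eq_zero, not_or]
    exact ⟨two_ne_zero, by exact_mod_cast ne_of_gt hpos⟩
end
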